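/- Let zₙ = ((z_{n,i})_{i∈I}, (z_{n,j})_{j∈J}, (z_{n,k})_{k∈K}), n ∈ ℕ, be a free-free-Boolean independent sequence of three-faced families of random variables in a noncommutative probability space (A,φ) (equivalently, all mixed free-free-Boolean cumulants involving variables from distinct members of the sequence vanish: κ_{χ_ω,1_m}(z_{n₁,l₁},…,z_{n_m,l_m}) = 0 whenever the indices n₁,…,n_m are not all equal). Assume: (1) φ(z_{n,l}) = 0 for all l ∈ I⊔J⊔K and all n; (2) sup_n |φ(z_{n,l₁} ⋯ z_{n,l_m})| < ∞ for every l₁,…,l_m ∈ I⊔J⊔K; (3) lim_{N→∞} (1/N) Σ_{n=1}^{N} φ(z_{n,l} z_{n,l'}) = C_{l,l'} for every l, l' ∈ I⊔J⊔K. Let S_{N,l} = N^{-1/2} Σ_{n=1}^{N} z_{n,l}, and let Γ_C be the free-free-Boolean central limit distribution with covariance matrix C = (C_{k,l}). Then for every polynomial P ∈ ℂ⟨Z_l : l ∈ I⊔J⊔K⟩, lim_{N→∞} μ_{S_N}(P) = Γ_C(P), where μ_{S_N}(P) = φ(P evaluated at (S_{N,l})_{l∈I⊔J⊔K}). In particular,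 for every m and every ω : {1,…,m} → I⊔J⊔K, lim_{N→∞} κ_{χ_ω,1_m}(S_{N,ω(1)},…,S_{N,ω(m)}) equals C_{ω(1),ω(2)} if m = 2 and 0 otherwise. -/

import Mathlib

namespace FFB

/-- The three letters ℓ, c, r labelling the faces. -/
inductive Letter : Type where
  | l | c | r
deriving DecidableEq

/-- `x` is one of the letters `ℓ`, `c`. -/
def isLC (x : Letter) : Prop := x = Letter.l ∨ x = Letter.c

variable {α : Type*}

/-- The total order `≺_χ` on the index set determined by `χ`:
the elements of `χ⁻¹{ℓ,c}` in increasing order followed by the elements of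
`χ⁻¹{r}` in decreasing order. -/
def chiLT [LT α] (χ : α → Letter) (i j : α) : Prop :=
  (isLC (χ i) ∧ isLC (χ j) ∧ i < j)
  ∨ (isLC (χ i) ∧ χ j = Letter.r)
  ∨ (χ i = Letter.r ∧ χ j = Letter.r ∧ j < i)

/-- A partition (equivalence relation) `π` is `χ`-noncrossing if there is no quadruple
`s₁ ≺_χ r₁ ≺_χ s₂ ≺_χ r₂` with `s₁ ∼ s₂`, `r₁ ∼ r₂` lying in different blocks. -/
def ChiNoncrossing [LT α] (χ : α → Letter) (π : Setoid α) : Prop :=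
  ∀ s₁ r₁ s₂ r₂ : α, chiLT χ s₁ r₁ → chiLT χ r₁ s₂ → chiLT χ s₂ r₂ →
    π s₁ s₂ → π r₁ r₂ → π s₁ r₁

/-- A partition `π` is `χ`-interval if whenever `i < j < k`, `i ∼ k` and `χ j = c`,
then `i, j, k` all lie in the same block. -/
def ChiInterval [LT α] (χ : α → Letter) (π : Setoid α) : Prop :=
  ∀ i j k : α, i < j → j < k → χ j = Letter.c → π i k → π i j

/-- The set of interval-bi-noncrossing partitions with respect to `χ`. -/
def IBNC [LT α] (χ : α → Letter) : Set (Setoid α) :=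
  {π | ChiNoncrossing χ π ∧ ChiInterval χ π}

/-- The set of `χ`-noncrossing partitions. -/
def NC [LT α] (χ : α → Letter) : Set (Setoid α) :=
  {π | ChiNoncrossing χ π}

/-- Restriction of a partition of `α` to a subset `V ⊆ α`. -/
def restrict (V : Set α) (σ : Setoid α) : Setoid V := Setoid.comap Subtype.val σ

/-- Restriction of `χ` to a subset `V ⊆ α`. -/
def restChi (V : Set α) (χ : α → Letter) : V → Letter := fun x => χ x.1

/- `mu` is the Möbius function of the finite poset `P` (with the induced order):
it is the (two-sided) convolution inverse of the zeta function. -/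
open Classical in
def IsMobius {β : Type*} [PartialOrder β] (P : Set β) (mu : β → β → ℂ) : Prop :=
  ∀ a ∈ P, ∀ b ∈ P, a ≤ b →
    ((∑ᶠ c ∈ {c | c ∈ P ∧ a ≤ c ∧ c ≤ b}, mu a c) = if a = b then 1 else 0) ∧
    ((∑ᶠ c ∈ {c | c ∈ P ∧ a ≤ c ∧ c ≤ b}, mu c b) = if a = b then 1 else 0)

section Moments

variable {A : Type*} [Ring A] [LinearOrder α] [Finite α]

/-- `φ_V(z₁,…,zₙ) = φ(z_{l₁} ⋯ z_{l_k})` where `V = {l₁ < ⋯ < l_k}`. -/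
noncomputable def phiV (φ : A → ℂ) (z : α → A) (V : Set α) : ℂ :=
  φ (((Set.toFinite V).toFinset.sort (· ≤ ·)).map z).prod

/-- `φ_σ(z₁,…,zₙ) = ∏_{V ∈ σ} φ_V(z₁,…,zₙ)`. -/
noncomputable def phiPart (φ : A → ℂ) (z : α → A) (σ : Setoid α) : ℂ :=
  ∏ᶠ q : Quotient σ, phiV φ z {y | Quotient.mk σ y = q}

/-- The free-free-Boolean cumulant
`κ_{χ,π}(z₁,…,zₙ) = Σ_{σ ∈ IBNC(χ), σ ≤ π} μ_{IBNC(χ)}(σ,π) φ_σ(z₁,…,zₙ)`,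
where `mu` is (a function which is) the Möbius function of `IBNC(χ)`. -/
noncomputable def cum (φ : A → ℂ) (χ : α → Letter)
    (mu : Setoid α → Setoid α → ℂ) (z : α → A) (π : Setoid α) : ℂ :=
  ∑ᶠ σ ∈ {σ | σ ∈ IBNC χ ∧ σ ≤ π}, mu σ π * phiPart φ z σ

end Moments

/-- Combinatorial free-free-Boolean independence: mixed cumulants vanish.
`F i x` is the face of the `i`-th triple labelled by the letter `x`. -/
def CombFFB {A : Type*} [Ring A] [Algebra ℂ A] (φ : A →ₗ[ℂ] ℂ) {I : Type*}
    (F : I → Letter → NonUnitalSubalgebra ℂ A) : Prop :=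
  ∀ (n : ℕ) (χ : Fin n → Letter) (ω : Fin n → I) (z : Fin n → A),
    (∀ k, z k ∈ F (ω k) (χ k)) → (¬ ∃ i, ∀ k, ω k = i) →
    ∀ mu : Setoid (Fin n) → Setoid (Fin n) → ℂ, IsMobius (IBNC χ) mu →
      cum (⇑φ) χ mu z ⊤ = 0

end FFB

namespace FFB

/-- The map `χ_ω` determined by a word `ω` in the disjoint union `I ⊔ J ⊔ K`; the disjoint
union of the three index sets is encoded as a type `S` together with a labelling
`lab : S → Letter` (`lab⁻¹(ℓ) = I`, `lab⁻¹(r) = J`, `lab⁻¹(c) = K`). -/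
def chiOf {S : Type*} (lab : S → Letter) {n : ℕ} (ω : Fin n → S) : Fin n → Letter :=
  fun k => lab (ω k)

/-- `Γ` is a free-free-Boolean central limit distribution on `ℂ⟨Z_k : k ∈ I ⊔ J ⊔ K⟩`. -/
def IsCLTDistribution {S : Type*} (lab : S → Letter)
    (Γ : FreeAlgebra ℂ S →ₗ[ℂ] ℂ) : Prop :=
  Γ 1 = 1 ∧
  ∀ (n : ℕ), 0 < n → n ≠ 2 → ∀ (ω : Fin n → S)
    (mu : Setoid (Fin n) → Setoid (Fin n) → ℂ),
    IsMobius (IBNC (chiOf lab ω)) mu →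
    cum (⇑Γ) (chiOf lab ω) mu (fun k => FreeAlgebra.ι ℂ (ω k)) ⊤ = 0

/-- The normalized sums `S_{N,l} = N^{-1/2} Σ_{n<N} z_{n,l}`. -/
noncomputable def SN {S A : Type*} [Ring A] [Algebra ℂ A]
    (z : ℕ → S → A) (N : ℕ) (l : S) : A :=
  ((Real.sqrt N : ℂ))⁻¹ • ∑ n ∈ Finset.range N, z n l


-- ========================================================================
-- Auxiliary material for the proof
-- ========================================================================

instance {α : Type*} [Finite α] : Finite (Setoid α) :=
  Finite.of_injective (fun s : Setoid α => ⇑s) fun _ _ h =>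
    Setoid.ext fun x y => iff_of_eq (congrFun (congrFun h x) y)

theorem chiLT_asymm {α : Type*} [Preorder α] {χ : α → Letter} {i j : α}
    (h1 : chiLT χ i j) (h2 : chiLT χ j i) : False := by
  have hr : ∀ x : Letter, isLC x → x = Letter.r → False := by
    intro x hx hxr; rw [hxr] at hx; rcases hx with h | h <;> exact Letter.noConfusion h
  rcases h1 with ⟨hi, hj, hij⟩ | ⟨hi, hj⟩ | ⟨hi, hj, hij⟩ <;>
    rcases h2 with ⟨hi', hj', hij'⟩ | ⟨hi', hj'⟩ | ⟨hi', hj', hij'⟩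
  · exact absurd hij' (not_lt_of_gt hij)
  · exact hr _ hi hj'
  · exact hr _ hi hj'
  · exact hr _ hi' hj
  · exact hr _ hi' hj
  · exact hr _ hi hj'
  · exact hr _ hj' hi
  · exact hr _ hi' hj
  · exact absurd hij' (not_lt_of_gt hij)

theorem top_mem_IBNC {α : Type*} [LT α] (χ : α → Letter) : (⊤ : Setoid α) ∈ IBNC χ :=
  ⟨fun _ _ _ _ _ _ _ _ _ => trivial, fun _ _ _ _ _ _ _ => trivial⟩

theorem bot_mem_IBNC {α : Type*} [LinearOrder α] (χ : α → Letter) :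
    (⊥ : Setoid α) ∈ IBNC χ := by
  constructor
  · intro s₁ r₁ s₂ r₂ h1 h2 h3 hs hr
    have hs' : s₁ = s₂ := hs
    have hr' : r₁ = r₂ := hr
    subst hs'; subst hr'
    exact absurd h2 (fun h2 => chiLT_asymm h1 h2)
  · intro i j k hij hjk _ hik
    have : i = k := hik
    subst this
    exact absurd (hij.trans hjk) (lt_irrefl _)

section MobiusExists

open Classical Matrix Finset

variable {β : Type*} [PartialOrder β] [Finite β]

theorem exists_isMobius (P : Set β) : ∃ mu : β → β → ℂ, IsMobius P mu := by
  classical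
  haveI : Fintype ↥P := Fintype.ofFinite _
  set n : ℕ := Fintype.card ↥P + 1 with hn
  set N : Matrix ↥P ↥P ℂ := fun a b => if (a : β) < (b : β) then 1 else 0 with hN
  set Z : Matrix ↥P ↥P ℂ := fun a b => if (a : β) ≤ (b : β) then 1 else 0 with hZ
  have hZN : Z = 1 + N := by
    ext a b
    rw [Matrix.add_apply, Matrix.one_apply]
    simp only [hZ, hN]
    by_cases hab : (a : β) = (b : β)
    · have : a = b := Subtype.ext hab
      subst this
      simp
    · have hne : a ≠ b := fun h => hab (congrArg _ h)
      simp only [if_neg hne]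
      by_cases h : (a : β) ≤ (b : β)
      · rw [if_pos h, if_pos (lt_of_le_of_ne h hab)]; ring
      · rw [if_neg h, if_neg (fun hlt : (a : β) < (b : β) => h hlt.le)]; ring
  set h : ↥P → ℕ := fun b => (univ.filter (fun c : ↥P => (c : β) < (b : β))).card with hh
  have hrank : ∀ a b : ↥P, (a : β) < (b : β) → h a < h b := by
    intro a b hab
    apply Finset.card_lt_card
    constructor
    · intro c hc
      simp only [mem_filter, mem_univ, true_and] at hc ⊢
      exact hc.trans hab
    · intro hsub
      have := hsub (by simp only [mem_filter, mem_univ, true_and]; exact hab :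
        a ∈ univ.filter (fun c : ↥P => (c : β) < (b : β)))
      simp only [mem_filter, mem_univ, true_and] at this
      exact lt_irrefl _ this
  have key : ∀ (k : ℕ) (a b : ↥P), (N ^ k) a b ≠ 0 → (a : β) ≤ (b : β) ∧ h a + k ≤ h b := by
    intro k
    induction k with
    | zero =>
      intro a b hab
      rw [pow_zero, Matrix.one_apply] at hab
      have : a = b := by by_contra hne; rw [if_neg hne] at hab; exact hab rfl
      subst this; exact ⟨le_refl _, by omega⟩
    | succ k ih =>
      intro a b hab
      rw [pow_succ, Matrix.mul_apply] at hab
      obtain ⟨c, -, hc⟩ := Finset.exists_ne_zero_of_sum_ne_zero hab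
      have h1 : (N ^ k) a c ≠ 0 := fun h0 => hc (by rw [h0, zero_mul])
      have h2 : N c b ≠ 0 := fun h0 => hc (by rw [h0, mul_zero])
      have hcb : (c : β) < (b : β) := by
        by_contra hcb; rw [hN] at h2; simp only [if_neg hcb] at h2; exact h2 rfl
      obtain ⟨hac, hk⟩ := ih a c h1
      exact ⟨hac.trans hcb.le, by have := hrank c b hcb; omega⟩
  have hNn : N ^ n = 0 := by
    ext a b
    by_contra hab
    obtain ⟨-, hk⟩ := key n a b hab
    have hb : h b ≤ Fintype.card ↥P := by
      rw [hh]; exact (Finset.card_filter_le _ _).trans (by simp)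
    omega
  set mu' : Matrix ↥P ↥P ℂ := ∑ i ∈ Finset.range n, (-N) ^ i with hmu'
  have hnegN : (-N) ^ n = 0 := by rw [neg_pow, hNn, mul_zero]
  have hmuZ : mu' * Z = 1 := by
    have h3 := geom_sum_mul (-N) n
    rw [hnegN, zero_sub] at h3
    have h2 : (-N) - 1 = -Z := by rw [hZN]; abel
    rw [h2, mul_neg, neg_eq_iff_eq_neg, neg_neg] at h3
    rw [hmu', h3]
  have hZmu : Z * mu' = 1 := by
    have h3 := mul_geom_sum (-N) n
    rw [hnegN, zero_sub] at h3
    have h2 : (-N) - 1 = -Z := by rw [hZN]; abel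
    rw [h2, neg_mul, neg_eq_iff_eq_neg, neg_neg] at h3
    rw [hmu', h3]
  have hsupp : ∀ a b : ↥P, mu' a b ≠ 0 → (a : β) ≤ (b : β) := by
    intro a b hab
    rw [hmu'] at hab
    have : (∑ i ∈ Finset.range n, ((-N) ^ i)) a b = ∑ i ∈ Finset.range n, ((-N) ^ i) a b := by
      simp [Matrix.sum_apply]
    rw [this] at hab
    obtain ⟨i, -, hi⟩ := Finset.exists_ne_zero_of_sum_ne_zero hab
    have hneg : (-N) = (-1 : ℂ) • N := by simp
    rw [hneg, smul_pow, Matrix.smul_apply, smul_eq_mul] at hi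
    have : (N ^ i) a b ≠ 0 := fun h0 => hi (by rw [h0, mul_zero])
    exact (key i a b this).1
  refine ⟨fun a b => if ha : a ∈ P then (if hb : b ∈ P then mu' ⟨a, ha⟩ ⟨b, hb⟩ else 0) else 0, ?_⟩
  intro a ha b hb hab
  have hsfin : ({c | c ∈ P ∧ a ≤ c ∧ c ≤ b} : Set β).Finite := Set.toFinite _
  set T : Finset ↥P := univ.filter (fun c : ↥P => a ≤ (c : β) ∧ (c : β) ≤ b) with hT
  have hbij : ∀ f : β → β → ℂ, ∑ᶠ c ∈ {c | c ∈ P ∧ a ≤ c ∧ c ≤ b}, f a c = ∑ c ∈ T, f a (c : β) := by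
    intro f
    rw [finsum_mem_eq_finite_toFinset_sum _ hsfin]
    apply Finset.sum_bij (fun (c : β) (hc : c ∈ hsfin.toFinset) => (⟨c, by
      rw [Set.Finite.mem_toFinset] at hc; exact hc.1⟩ : ↥P))
    · intro c hc
      rw [Set.Finite.mem_toFinset] at hc
      simp only [hT, mem_filter, mem_univ, true_and]
      exact hc.2
    · intro c hc d hd hcd
      exact Subtype.mk_eq_mk.mp hcd ▸ congrArg Subtype.val hcd
    · intro c hc
      simp only [hT, mem_filter, mem_univ, true_and] at hc
      exact ⟨(c : β), by rw [Set.Finite.mem_toFinset]; exact ⟨c.2, hc⟩, rfl⟩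
    · intro c hc; rfl
  have hbij' : ∀ f : β → β → ℂ, ∑ᶠ c ∈ {c | c ∈ P ∧ a ≤ c ∧ c ≤ b}, f c b = ∑ c ∈ T, f (c : β) b := by
    intro f
    rw [finsum_mem_eq_finite_toFinset_sum _ hsfin]
    apply Finset.sum_bij (fun (c : β) (hc : c ∈ hsfin.toFinset) => (⟨c, by
      rw [Set.Finite.mem_toFinset] at hc; exact hc.1⟩ : ↥P))
    · intro c hc
      rw [Set.Finite.mem_toFinset] at hc
      simp only [hT, mem_filter, mem_univ, true_and]
      exact hc.2
    · intro c hc d hd hcd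
      exact Subtype.mk_eq_mk.mp hcd ▸ congrArg Subtype.val hcd
    · intro c hc
      simp only [hT, mem_filter, mem_univ, true_and] at hc
      exact ⟨(c : β), by rw [Set.Finite.mem_toFinset]; exact ⟨c.2, hc⟩, rfl⟩
    · intro c hc; rfl
  constructor
  · rw [hbij (fun a b => if ha : a ∈ P then (if hb : b ∈ P then mu' ⟨a, ha⟩ ⟨b, hb⟩ else 0) else 0)]
    have hMZ : (mu' * Z) ⟨a, ha⟩ ⟨b, hb⟩ = (if a = b then 1 else 0) := by
      rw [hmuZ, Matrix.one_apply]
      by_cases hab' : a = b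
      · rw [if_pos (Subtype.ext hab'), if_pos hab']
      · rw [if_neg (fun hh' => hab' (congrArg Subtype.val hh')), if_neg hab']
    rw [← hMZ, Matrix.mul_apply]
    rw [← Finset.sum_subset (Finset.subset_univ T)]
    · apply Finset.sum_congr rfl
      intro c hc
      simp only [hT, mem_filter, mem_univ, true_and] at hc
      rw [hZ]
      simp only [if_pos hc.2]
      rw [dif_pos ha, dif_pos c.2, mul_one]
    · intro c _ hc
      simp only [hT, mem_filter, mem_univ, true_and, not_and_or] at hc
      rcases hc with hc | hc
      · have : mu' ⟨a, ha⟩ c = 0 := by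
          by_contra h0
          exact hc (hsupp _ _ h0)
        rw [this, zero_mul]
      · rw [hZ]; simp only [if_neg hc, mul_zero]
  · rw [hbij' (fun a b => if ha : a ∈ P then (if hb : b ∈ P then mu' ⟨a, ha⟩ ⟨b, hb⟩ else 0) else 0)]
    have hMZ : (Z * mu') ⟨a, ha⟩ ⟨b, hb⟩ = (if a = b then 1 else 0) := by
      rw [hZmu, Matrix.one_apply]
      by_cases hab' : a = b
      · rw [if_pos (Subtype.ext hab'), if_pos hab']
      · rw [if_neg (fun hh' => hab' (congrArg Subtype.val hh')), if_neg hab']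
    rw [← hMZ, Matrix.mul_apply]
    rw [← Finset.sum_subset (Finset.subset_univ T)]
    · apply Finset.sum_congr rfl
      intro c hc
      simp only [hT, mem_filter, mem_univ, true_and] at hc
      rw [hZ]
      simp only [if_pos hc.1]
      rw [dif_pos c.2, dif_pos hb, one_mul]
    · intro c _ hc
      simp only [hT, mem_filter, mem_univ, true_and, not_and_or] at hc
      rcases hc with hc | hc
      · rw [hZ]; simp only [if_neg hc, zero_mul]
      · have : mu' c ⟨b, hb⟩ = 0 := by
          by_contra h0
          exact hc (hsupp _ _ h0)
        rw [this, mul_zero]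

end MobiusExists

theorem mu_refl {β : Type*} [PartialOrder β] {P : Set β} {mu : β → β → ℂ}
    (h : IsMobius P mu) {b : β} (hb : b ∈ P) : mu b b = 1 := by
  have h1 := (h b hb b hb le_rfl).1
  have hset : {c | c ∈ P ∧ b ≤ c ∧ c ≤ b} = {b} := by
    ext c
    constructor
    · rintro ⟨-, h1, h2⟩; exact le_antisymm h2 h1
    · rintro rfl; exact ⟨hb, le_rfl, le_rfl⟩
  rw [hset, finsum_mem_singleton, if_pos rfl] at h1
  exact h1

theorem setoid_fin_one (σ : Setoid (Fin 1)) : σ = ⊤ := by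
  apply Setoid.ext
  intro a b
  have hab : a = b := Subsingleton.elim a b
  subst hab
  exact iff_of_true (Setoid.refl a) trivial

theorem setoid_fin_two (σ : Setoid (Fin 2)) : σ = ⊥ ∨ σ = ⊤ := by
  by_cases h01 : σ 0 1
  · right
    apply Setoid.ext
    intro a b
    refine iff_of_true ?_ trivial
    fin_cases a <;> fin_cases b
    · exact Setoid.refl _
    · exact h01
    · exact Setoid.symm h01
    · exact Setoid.refl _
  · left
    apply Setoid.ext
    intro a b
    rw [show ((⊥ : Setoid (Fin 2)) a b) = (a = b) from congrFun (congrFun Setoid.bot_def a) b]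
    constructor
    · intro hab
      fin_cases a <;> fin_cases b
      · rfl
      · exact absurd hab h01
      · exact absurd (Setoid.symm hab) h01
      · rfl
    · rintro rfl; exact Setoid.refl _

theorem bot_ne_top_fin_two : (⊥ : Setoid (Fin 2)) ≠ ⊤ := by
  intro h
  have h2 : (⊥ : Setoid (Fin 2)) 0 1 := by rw [h]; trivial
  rw [show ((⊥ : Setoid (Fin 2)) 0 1) = ((0 : Fin 2) = 1) from
    congrFun (congrFun Setoid.bot_def 0) 1] at h2
  exact absurd h2 (by decide)

section MomLemmas

variable {α : Type*} {A : Type*} [Ring A] [Algebra ℂ A] [LinearOrder α] [Finite α]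
variable (φ : A →ₗ[ℂ] ℂ)

theorem list_prod_update_add [DecidableEq α] (z : α → A) (k : α) (x y : A) :
    ∀ L : List α, L.Nodup → k ∈ L →
      (L.map (Function.update z k (x + y))).prod
        = (L.map (Function.update z k x)).prod + (L.map (Function.update z k y)).prod := by
  intro L
  induction L with
  | nil => intro _ h; exact absurd h List.not_mem_nil
  | cons a t ih =>
    intro hnd hk
    rcases List.nodup_cons.mp hnd with ⟨hat, hndt⟩
    by_cases hak : a = k
    · subst hak
      have hmap : ∀ w : A, t.map (Function.update z a w) = t.map z := by
        intro w
        apply List.map_congr_left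
        intro b hb
        exact Function.update_of_ne (fun hba => hat (by rw [← hba]; exact hb)) _ _
      simp only [List.map_cons, List.prod_cons, hmap, Function.update_self]
      rw [add_mul]
    · have hkt : k ∈ t := by
        rcases List.mem_cons.mp hk with h | h
        · exact absurd h.symm hak
        · exact h
      simp only [List.map_cons, List.prod_cons,
        Function.update_of_ne hak, ih hndt hkt]
      rw [mul_add]

theorem list_prod_update_smul [DecidableEq α] (z : α → A) (k : α) (c : ℂ) (x : A) :
    ∀ L : List α, L.Nodup → k ∈ L →
      (L.map (Function.update z k (c • x))).prod
        = c • (L.map (Function.update z k x)).prod := by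
  intro L
  induction L with
  | nil => intro _ h; exact absurd h List.not_mem_nil
  | cons a t ih =>
    intro hnd hk
    rcases List.nodup_cons.mp hnd with ⟨hat, hndt⟩
    by_cases hak : a = k
    · subst hak
      have hmap : ∀ w : A, t.map (Function.update z a w) = t.map z := by
        intro w
        apply List.map_congr_left
        intro b hb
        exact Function.update_of_ne (fun hba => hat (by rw [← hba]; exact hb)) _ _
      simp only [List.map_cons, List.prod_cons, hmap, Function.update_self]
      rw [smul_mul_assoc]
    · have hkt : k ∈ t := by
        rcases List.mem_cons.mp hk with h | h
        · exact absurd h.symm hak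
        · exact h
      simp only [List.map_cons, List.prod_cons,
        Function.update_of_ne hak, ih hndt hkt]
      rw [mul_smul_comm]

theorem phiV_update_not_mem [DecidableEq α] (z : α → A) (k : α) (x : A) {V : Set α} (hk : k ∉ V) :
    phiV (⇑φ) (Function.update z k x) V = phiV (⇑φ) z V := by
  unfold phiV
  congr 1
  congr 1
  apply List.map_congr_left
  intro b hb
  rw [Finset.mem_sort, Set.Finite.mem_toFinset] at hb
  exact Function.update_of_ne (fun hbk => hk (by rw [← hbk]; exact hb)) _ _

theorem phiV_update_add [DecidableEq α] (z : α → A) (k : α) (x y : A) {V : Set α} (hk : k ∈ V) :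
    phiV (⇑φ) (Function.update z k (x + y)) V
      = phiV (⇑φ) (Function.update z k x) V + phiV (⇑φ) (Function.update z k y) V := by
  unfold phiV
  rw [← map_add]
  congr 1
  exact list_prod_update_add z k x y _ (Finset.sort_nodup _ _)
    (by rw [Finset.mem_sort, Set.Finite.mem_toFinset]; exact hk)

theorem phiV_update_smul [DecidableEq α] (z : α → A) (k : α) (c : ℂ) (x : A) {V : Set α}
    (hk : k ∈ V) :
    phiV (⇑φ) (Function.update z k (c • x)) V = c • phiV (⇑φ) (Function.update z k x) V := by
  unfold phiV
  rw [← map_smul]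
  congr 1
  exact list_prod_update_smul z k c x _ (Finset.sort_nodup _ _)
    (by rw [Finset.mem_sort, Set.Finite.mem_toFinset]; exact hk)

theorem phiPart_update_add [DecidableEq α] (z : α → A) (k : α) (x y : A) (σ : Setoid α) :
    phiPart (⇑φ) (Function.update z k (x + y)) σ
      = phiPart (⇑φ) (Function.update z k x) σ + phiPart (⇑φ) (Function.update z k y) σ := by
  classical
  letI : Fintype (Quotient σ) := Fintype.ofFinite _
  unfold phiPart
  rw [finprod_eq_prod_of_fintype, finprod_eq_prod_of_fintype, finprod_eq_prod_of_fintype]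
  set q0 : Quotient σ := Quotient.mk σ k with hq0
  have hsplit : ∀ w : α → A,
      (∏ q : Quotient σ, phiV (⇑φ) w {y | Quotient.mk σ y = q})
        = phiV (⇑φ) w {y | Quotient.mk σ y = q0}
          * ∏ q ∈ Finset.univ.erase q0, phiV (⇑φ) w {y | Quotient.mk σ y = q} := by
    intro w
    rw [← Finset.mul_prod_erase Finset.univ _ (Finset.mem_univ q0)]
  rw [hsplit, hsplit, hsplit]
  have htail : ∀ v : A, ∀ q ∈ Finset.univ.erase q0,
      phiV (⇑φ) (Function.update z k v) {y | Quotient.mk σ y = q}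
        = phiV (⇑φ) z {y | Quotient.mk σ y = q} := by
    intro v q hq
    apply phiV_update_not_mem
    intro hkmem
    exact (Finset.mem_erase.mp hq).1
      (by rw [hq0]; exact (show Quotient.mk σ k = q from hkmem).symm)
  rw [Finset.prod_congr rfl (htail (x + y)), Finset.prod_congr rfl (htail x),
    Finset.prod_congr rfl (htail y)]
  rw [phiV_update_add φ z k x y (by exact rfl)]
  ring

theorem phiPart_update_smul [DecidableEq α] (z : α → A) (k : α) (c : ℂ) (x : A) (σ : Setoid α) :
    phiPart (⇑φ) (Function.update z k (c • x)) σ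
      = c • phiPart (⇑φ) (Function.update z k x) σ := by
  classical
  letI : Fintype (Quotient σ) := Fintype.ofFinite _
  unfold phiPart
  rw [finprod_eq_prod_of_fintype, finprod_eq_prod_of_fintype]
  set q0 : Quotient σ := Quotient.mk σ k with hq0
  have hsplit : ∀ w : α → A,
      (∏ q : Quotient σ, phiV (⇑φ) w {y | Quotient.mk σ y = q})
        = phiV (⇑φ) w {y | Quotient.mk σ y = q0}
          * ∏ q ∈ Finset.univ.erase q0, phiV (⇑φ) w {y | Quotient.mk σ y = q} := by
    intro w
    rw [← Finset.mul_prod_erase Finset.univ _ (Finset.mem_univ q0)]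
  rw [hsplit, hsplit]
  have htail : ∀ v : A, ∀ q ∈ Finset.univ.erase q0,
      phiV (⇑φ) (Function.update z k v) {y | Quotient.mk σ y = q}
        = phiV (⇑φ) z {y | Quotient.mk σ y = q} := by
    intro v q hq
    apply phiV_update_not_mem
    intro hkmem
    exact (Finset.mem_erase.mp hq).1
      (by rw [hq0]; exact (show Quotient.mk σ k = q from hkmem).symm)
  rw [Finset.prod_congr rfl (htail (c • x)), Finset.prod_congr rfl (htail x)]
  rw [phiV_update_smul φ z k c x (by exact rfl)]
  rw [smul_mul_assoc]

/-- The finite set of partitions in `IBNC χ`. -/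
noncomputable def IBNCfin (χ : α → Letter) : Finset (Setoid α) :=
  (Set.toFinite (IBNC χ)).toFinset

theorem cum_top_eq (χ : α → Letter) (mu : Setoid α → Setoid α → ℂ) (z : α → A) :
    cum (⇑φ) χ mu z ⊤ = ∑ σ ∈ IBNCfin χ, mu σ ⊤ * phiPart (⇑φ) z σ := by
  unfold cum
  have hset : {σ : Setoid α | σ ∈ IBNC χ ∧ σ ≤ ⊤} = IBNC χ := by
    ext σ; simp [le_top]
  rw [hset, finsum_mem_eq_finite_toFinset_sum _ (Set.toFinite _)]
  rfl

theorem cum_update_add [DecidableEq α] (χ : α → Letter) (mu : Setoid α → Setoid α → ℂ)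
    (z : α → A) (k : α) (x y : A) :
    cum (⇑φ) χ mu (Function.update z k (x + y)) ⊤
      = cum (⇑φ) χ mu (Function.update z k x) ⊤ + cum (⇑φ) χ mu (Function.update z k y) ⊤ := by
  rw [cum_top_eq, cum_top_eq, cum_top_eq, ← Finset.sum_add_distrib]
  apply Finset.sum_congr rfl
  intro σ _
  rw [phiPart_update_add]
  ring

theorem cum_update_smul [DecidableEq α] (χ : α → Letter) (mu : Setoid α → Setoid α → ℂ)
    (z : α → A) (k : α) (c : ℂ) (x : A) :
    cum (⇑φ) χ mu (Function.update z k (c • x)) ⊤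
      = c • cum (⇑φ) χ mu (Function.update z k x) ⊤ := by
  rw [cum_top_eq, cum_top_eq, Finset.smul_sum]
  apply Finset.sum_congr rfl
  intro σ _
  rw [phiPart_update_smul]
  rw [smul_eq_mul, smul_eq_mul]
  ring

/-- The sorted list of elements of the block of `σ` labelled by `q`. -/
noncomputable def blockList (σ : Setoid α) (q : Quotient σ) : List α :=
  (Set.toFinite {y | Quotient.mk σ y = q}).toFinset.sort (· ≤ ·)

theorem phiV_block (z : α → A) (σ : Setoid α) (q : Quotient σ) :
    phiV (⇑φ) z {y | Quotient.mk σ y = q}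
      = φ (List.ofFn (fun i => z ((blockList σ q).get i))).prod := by
  unfold phiV blockList
  congr 1
  conv_lhs => rw [← List.ofFn_get (((Set.toFinite {y | Quotient.mk σ y = q}).toFinset).sort (· ≤ ·)), List.map_ofFn]
  rfl

theorem phiPart_eq (z : α → A) (σ : Setoid α) :
    phiPart (⇑φ) z σ
      = ∏ᶠ q : Quotient σ, φ (List.ofFn (fun i => z ((blockList σ q).get i))).prod :=
  finprod_congr (fun q => phiV_block φ z σ q)

theorem phiPart_top {m : ℕ} (hm : 0 < m) (z : Fin m → A) :
    phiPart (⇑φ) z (⊤ : Setoid (Fin m)) = φ (List.ofFn z).prod := by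
  unfold phiPart
  have h0 : ∀ q : Quotient (⊤ : Setoid (Fin m)), q = Quotient.mk ⊤ ⟨0, hm⟩ :=
    fun q => Quotient.inductionOn q (fun a => Quotient.sound trivial)
  rw [finprod_eq_single _ (Quotient.mk ⊤ ⟨0, hm⟩) (fun x hx => absurd (h0 x) hx)]
  have hset : {y : Fin m | Quotient.mk ⊤ y = Quotient.mk ⊤ ⟨0, hm⟩} = Set.univ := by
    ext y
    exact iff_of_true (Quotient.sound trivial) trivial
  rw [hset]
  unfold phiV
  congr 1
  have huniv : (Set.toFinite (Set.univ : Set (Fin m))).toFinset = Finset.univ := by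
    ext y; simp
  rw [huniv, Fin.sort_univ, ← List.ofFn_eq_map]

theorem phiPart_bot (z : α → A) :
    phiPart (⇑φ) z (⊥ : Setoid α) = ∏ᶠ i : α, φ (z i) := by
  letI : Fintype α := Fintype.ofFinite _
  letI : Fintype (Quotient (⊥ : Setoid α)) := Fintype.ofFinite _
  unfold phiPart
  rw [finprod_eq_prod_of_fintype, finprod_eq_prod_of_fintype]
  have hbij : Function.Bijective (Quotient.mk (⊥ : Setoid α)) := by
    constructor
    · intro a b hab
      exact Quotient.exact hab
    · intro q
      exact Quotient.exists_rep q
  rw [← Fintype.prod_bijective _ hbij _ _ (fun i => rfl)]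
  apply Finset.prod_congr rfl
  intro i _
  have hset : {y : α | Quotient.mk ⊥ y = Quotient.mk ⊥ i} = {i} := by
    ext y
    constructor
    · intro hy
      exact Quotient.exact hy
    · rintro rfl
      rfl
  rw [hset]
  unfold phiV
  have hsingle : (Set.toFinite ({i} : Set α)).toFinset = {i} := by
    ext y; simp
  rw [hsingle, Finset.sort_singleton]
  simp

theorem blockList_length_lt {m : ℕ} (σ : Setoid (Fin m)) (hσ : σ ≠ ⊤) (q : Quotient σ) :
    (blockList σ q).length < m := by
  unfold blockList
  rw [Finset.length_sort]
  have hne : ∃ a b : Fin m, ¬ σ a b := by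
    by_contra hcon
    push_neg at hcon
    exact hσ (Setoid.ext fun a b => iff_of_true (hcon a b) trivial)
  obtain ⟨a, b, hab⟩ := hne
  obtain ⟨c, rfl⟩ := Quotient.exists_rep q
  have hx : ∃ x : Fin m, x ∉ (Set.toFinite {y | Quotient.mk σ y = Quotient.mk σ c}).toFinset := by
    by_cases hac : σ a c
    · refine ⟨b, ?_⟩
      rw [Set.Finite.mem_toFinset]
      intro hbc
      exact hab (Setoid.trans hac (Setoid.symm (Quotient.exact hbc)))
    · refine ⟨a, ?_⟩
      rw [Set.Finite.mem_toFinset]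
      intro hbc
      exact hac (Quotient.exact hbc)
  obtain ⟨x, hx⟩ := hx
  calc (Set.toFinite {y | Quotient.mk σ y = Quotient.mk σ c}).toFinset.card
      < Finset.univ.card := Finset.card_lt_card
        (Finset.ssubset_univ_iff.mpr (fun huniv => hx (huniv ▸ Finset.mem_univ x)))
    _ = m := by rw [Finset.card_univ, Fintype.card_fin]

end MomLemmas


section FinCums

variable {A : Type*} [Ring A] [Algebra ℂ A] (φ : A →ₗ[ℂ] ℂ)

theorem IBNC_fin_one (χ : Fin 1 → Letter) : IBNC χ = {⊤} := by
  ext σ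
  constructor
  · intro _; exact setoid_fin_one σ
  · rintro rfl; exact top_mem_IBNC χ

theorem isMobius_fin_one (χ : Fin 1 → Letter) :
    IsMobius (IBNC χ) (fun _ _ => (1 : ℂ)) := by
  intro a ha b hb hab
  rw [IBNC_fin_one, Set.mem_singleton_iff] at ha hb
  subst ha; subst hb
  have hset : {c | c ∈ IBNC χ ∧ (⊤ : Setoid (Fin 1)) ≤ c ∧ c ≤ ⊤} = {⊤} := by
    ext c
    constructor
    · intro _; exact setoid_fin_one c
    · rintro rfl; exact ⟨top_mem_IBNC χ, le_rfl, le_rfl⟩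
  constructor <;> rw [hset, finsum_mem_singleton, if_pos rfl]

theorem cum_one (χ : Fin 1 → Letter) (mu : Setoid (Fin 1) → Setoid (Fin 1) → ℂ)
    (hmu : IsMobius (IBNC χ) mu) (y : Fin 1 → A) :
    cum (⇑φ) χ mu y ⊤ = φ (y 0) := by
  unfold cum
  have hset : {σ | σ ∈ IBNC χ ∧ σ ≤ (⊤ : Setoid (Fin 1))} = {⊤} := by
    ext σ
    constructor
    · intro _; exact setoid_fin_one σ
    · rintro rfl; exact ⟨top_mem_IBNC χ, le_rfl⟩
  rw [hset, finsum_mem_singleton, mu_refl hmu (top_mem_IBNC χ),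
    phiPart_top φ one_pos, one_mul]
  congr 1
  simp

theorem cum_two (χ : Fin 2 → Letter) (mu : Setoid (Fin 2) → Setoid (Fin 2) → ℂ)
    (hmu : IsMobius (IBNC χ) mu) (y : Fin 2 → A) :
    cum (⇑φ) χ mu y ⊤ = φ (y 0 * y 1) - φ (y 0) * φ (y 1) := by
  have hset : {σ | σ ∈ IBNC χ ∧ σ ≤ (⊤ : Setoid (Fin 2))} = {⊥, ⊤} := by
    ext σ
    constructor
    · intro hσ
      exact setoid_fin_two σ
    · rintro (rfl | rfl)
      · exact ⟨bot_mem_IBNC χ, le_top⟩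
      · exact ⟨top_mem_IBNC χ, le_rfl⟩
  have hset2 : {c | c ∈ IBNC χ ∧ (⊥ : Setoid (Fin 2)) ≤ c ∧ c ≤ ⊤} = {⊥, ⊤} := by
    ext σ
    constructor
    · intro hσ
      exact setoid_fin_two σ
    · rintro (rfl | rfl)
      · exact ⟨bot_mem_IBNC χ, le_rfl, le_top⟩
      · exact ⟨top_mem_IBNC χ, bot_le, le_rfl⟩
  have hmu_bt : mu ⊥ ⊤ = -1 := by
    have h2 := (hmu ⊥ (bot_mem_IBNC χ) ⊤ (top_mem_IBNC χ) le_top).2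
    rw [hset2, finsum_mem_pair bot_ne_top_fin_two, if_neg bot_ne_top_fin_two,
      mu_refl hmu (top_mem_IBNC χ)] at h2
    linear_combination h2
  unfold cum
  rw [hset, finsum_mem_pair bot_ne_top_fin_two, hmu_bt,
    mu_refl hmu (top_mem_IBNC χ), phiPart_top φ two_pos, phiPart_bot]
  have hofn : (List.ofFn y).prod = y 0 * y 1 := by
    simp [List.ofFn_succ]
  have hprod : (∏ᶠ i : Fin 2, φ (y i)) = φ (y 0) * φ (y 1) := by
    rw [finprod_eq_prod_of_fintype, Fin.prod_univ_two]
  rw [hofn, hprod]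
  ring

/-- The cumulant functional as a multilinear map in the variables. -/
noncomputable def cumML {m : ℕ} (χ : Fin m → Letter)
    (mu : Setoid (Fin m) → Setoid (Fin m) → ℂ) :
    MultilinearMap ℂ (fun _ : Fin m => A) ℂ where
  toFun z := cum (⇑φ) χ mu z ⊤
  map_update_add' {dec} z k x y := cum_update_add φ χ mu z k x y
  map_update_smul' {dec} z k c x := cum_update_smul φ χ mu z k c x

theorem cum_expand {S : Type*} (lab : S → Letter) (z : ℕ → S → A) {m : ℕ} (hm : 0 < m)
    (ω : Fin m → S) (mu : Setoid (Fin m) → Setoid (Fin m) → ℂ)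
    (hindep : ∀ ν : Fin m → ℕ, (¬ ∃ n₀, ∀ k, ν k = n₀) →
      cum (⇑φ) (chiOf lab ω) mu (fun k => z (ν k) (ω k)) ⊤ = 0)
    (N : ℕ) :
    cum (⇑φ) (chiOf lab ω) mu (fun k => SN z N (ω k)) ⊤
      = (((Real.sqrt N : ℝ) : ℂ))⁻¹ ^ m •
          ∑ n ∈ Finset.range N, cum (⇑φ) (chiOf lab ω) mu (fun k => z n (ω k)) ⊤ := by
  classical
  set F := cumML φ (chiOf lab ω) mu with hF
  have h0 : ∀ y : Fin m → A, cum (⇑φ) (chiOf lab ω) mu y ⊤ = F y := fun _ => rfl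
  rw [h0]
  have h1 : (fun k => SN z N (ω k))
      = fun k : Fin m => (fun _ : Fin m => (((Real.sqrt N : ℝ) : ℂ))⁻¹) k •
          (fun k : Fin m => ∑ j : Fin N, z (j : ℕ) (ω k)) k := by
    funext k
    show ((Real.sqrt N : ℝ) : ℂ)⁻¹ • ∑ n ∈ Finset.range N, z n (ω k)
      = ((Real.sqrt N : ℝ) : ℂ)⁻¹ • ∑ j : Fin N, z (j : ℕ) (ω k)
    rw [Fin.sum_univ_eq_sum_range (fun n => z n (ω k)) N]
  rw [h1, F.map_smul_univ, Finset.prod_const, Finset.card_univ, Fintype.card_fin]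
  congr 1
  rw [F.map_sum]
  have hvanish : ∀ ν : Fin m → Fin N,
      ν ∉ (Finset.univ.image (fun n : Fin N => (fun _ : Fin m => n))) →
      F (fun k => z ((ν k : ℕ)) (ω k)) = 0 := by
    intro ν hν
    rw [← h0]
    apply hindep (fun k => (ν k : ℕ))
    rintro ⟨n₀, hn⟩
    apply hν
    rw [Finset.mem_image]
    refine ⟨ν ⟨0, hm⟩, Finset.mem_univ _, ?_⟩
    funext k
    exact Fin.val_injective (by rw [hn k, hn ⟨0, hm⟩])
  rw [← Finset.sum_subset (Finset.subset_univ _) (fun ν _ hν => hvanish ν hν)]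
  rw [Finset.sum_image (by intro a _ b _ h; exact congrFun h ⟨0, hm⟩)]
  rw [← Fin.sum_univ_eq_sum_range
    (fun n : ℕ => cum (⇑φ) (chiOf lab ω) mu (fun k => z n (ω k)) ⊤) N]
  apply Finset.sum_congr rfl
  intro n _
  rw [h0]

theorem cum_bound {S : Type*} (lab : S → Letter) (z : ℕ → S → A) {m : ℕ} (ω : Fin m → S)
    (mu : Setoid (Fin m) → Setoid (Fin m) → ℂ)
    (hbdd : ∀ (m' : ℕ) (w : Fin m' → S), ∃ D : ℝ,
      ∀ n : ℕ, ‖φ (List.ofFn fun k => z n (w k)).prod‖ ≤ D) :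
    ∃ D : ℝ, 0 ≤ D ∧ ∀ n : ℕ,
      ‖cum (⇑φ) (chiOf lab ω) mu (fun k => z n (ω k)) ⊤‖ ≤ D := by
  classical
  set χ := chiOf lab ω with hχ
  have hg : ∀ (σ : Setoid (Fin m)) (q : Quotient σ), ∃ D : ℝ, 0 ≤ D ∧ ∀ n : ℕ,
      ‖φ (List.ofFn fun i => z n (ω ((blockList σ q).get i))).prod‖ ≤ D := by
    intro σ q
    obtain ⟨D, hD⟩ := hbdd _ (fun i => ω ((blockList σ q).get i))
    exact ⟨max D 0, le_max_right _ _, fun n => (hD n).trans (le_max_left _ _)⟩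
  choose g hg0 hgD using hg
  refine ⟨∑ σ ∈ IBNCfin χ, ‖mu σ ⊤‖ * ∏ᶠ q : Quotient σ, g σ q, ?_, ?_⟩
  · apply Finset.sum_nonneg
    intro σ _
    apply mul_nonneg (norm_nonneg _)
    letI : Fintype (Quotient σ) := Fintype.ofFinite _
    rw [finprod_eq_prod_of_fintype]
    exact Finset.prod_nonneg (fun q _ => hg0 σ q)
  · intro n
    rw [cum_top_eq]
    refine (norm_sum_le _ _).trans ?_
    apply Finset.sum_le_sum
    intro σ _
    rw [norm_mul]
    apply mul_le_mul_of_nonneg_left _ (norm_nonneg _)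
    letI : Fintype (Quotient σ) := Fintype.ofFinite _
    rw [phiPart_eq, finprod_eq_prod_of_fintype, finprod_eq_prod_of_fintype,
      norm_prod]
    exact Finset.prod_le_prod (fun q _ => norm_nonneg _) (fun q _ => hgD σ q n)

open Classical in
theorem moment_eq_cum_sub {B : Type*} [Ring B] [Algebra ℂ B] (ψ : B →ₗ[ℂ] ℂ) {m : ℕ}
    (hm : 0 < m) (χ : Fin m → Letter) (mu : Setoid (Fin m) → Setoid (Fin m) → ℂ)
    (hmu1 : mu ⊤ ⊤ = 1) (y : Fin m → B) :
    ψ (List.ofFn y).prod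
      = cum (⇑ψ) χ mu y ⊤
        - ∑ σ ∈ (IBNCfin χ).erase ⊤, mu σ ⊤ * phiPart (⇑ψ) y σ := by
  classical
  have htop : (⊤ : Setoid (Fin m)) ∈ IBNCfin χ := by
    unfold IBNCfin
    rw [Set.Finite.mem_toFinset]
    exact top_mem_IBNC χ
  rw [cum_top_eq, ← Finset.add_sum_erase _ _ htop, hmu1, one_mul, phiPart_top ψ hm]
  ring

theorem tendsto_sqrt_inv : Filter.Tendsto (fun N : ℕ => (Real.sqrt N)⁻¹)
    Filter.atTop (nhds 0) := by
  have h1 : Filter.Tendsto (fun N : ℕ => ((N : ℝ))⁻¹) Filter.atTop (nhds 0) :=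
    tendsto_inv_atTop_nhds_zero_nat
  have h2 := (Real.continuous_sqrt.tendsto 0).comp h1
  rw [Real.sqrt_zero] at h2
  refine Filter.Tendsto.congr (fun N => ?_) h2
  exact Real.sqrt_inv _

end FinCums


section CLT

variable {A : Type*} [Ring A] [Algebra ℂ A] (φ : A →ₗ[ℂ] ℂ)
variable {S : Type*} (lab : S → Letter) (z : ℕ → S → A) (C : S → S → ℂ)

/-- The limiting value of the cumulants of `S_N`. -/
noncomputable def climit {m : ℕ} (ω : Fin m → S) : ℂ :=
  if h : m = 2 then C (ω (h ▸ (0 : Fin 2))) (ω (h ▸ (1 : Fin 2))) else 0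

theorem climit_two (ω : Fin 2 → S) : climit C ω = C (ω 0) (ω 1) := dif_pos rfl

theorem climit_ne {m : ℕ} (ω : Fin m → S) (h : m ≠ 2) : climit C ω = 0 := dif_neg h

theorem Gamma_iota_zero (Γ : FreeAlgebra ℂ S →ₗ[ℂ] ℂ) (hΓ : IsCLTDistribution lab Γ)
    (l : S) : Γ (FreeAlgebra.ι ℂ l) = 0 := by
  have h := hΓ.2 1 one_pos (by norm_num) (fun _ => l) (fun _ _ => 1) (isMobius_fin_one _)
  rw [cum_one Γ _ _ (isMobius_fin_one _)] at h
  exact h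

theorem Gamma_cum (Γ : FreeAlgebra ℂ S →ₗ[ℂ] ℂ) (hΓ : IsCLTDistribution lab Γ)
    (hΓC : ∀ k l : S, Γ (FreeAlgebra.ι ℂ k * FreeAlgebra.ι ℂ l) = C k l)
    {m : ℕ} (hm : 0 < m) (ω : Fin m → S) (mu : Setoid (Fin m) → Setoid (Fin m) → ℂ)
    (hmu : IsMobius (IBNC (chiOf lab ω)) mu) :
    cum (⇑Γ) (chiOf lab ω) mu (fun k => FreeAlgebra.ι ℂ (ω k)) ⊤ = climit C ω := by
  by_cases h2 : m = 2
  · subst h2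
    rw [cum_two Γ _ mu hmu, climit_two]
    show Γ (FreeAlgebra.ι ℂ (ω 0) * FreeAlgebra.ι ℂ (ω 1))
        - Γ (FreeAlgebra.ι ℂ (ω 0)) * Γ (FreeAlgebra.ι ℂ (ω 1)) = C (ω 0) (ω 1)
    rw [hΓC, Gamma_iota_zero lab Γ hΓ, zero_mul, sub_zero]
  · rw [climit_ne C ω h2]
    exact hΓ.2 m hm h2 ω mu hmu

theorem cum_SN_tendsto
    (hindep : ∀ (m : ℕ) (ν : Fin m → ℕ) (ω : Fin m → S),
      (¬ ∃ n₀, ∀ k, ν k = n₀) →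
      ∀ mu : Setoid (Fin m) → Setoid (Fin m) → ℂ,
        IsMobius (IBNC (chiOf lab ω)) mu →
        cum (⇑φ) (chiOf lab ω) mu (fun k => z (ν k) (ω k)) ⊤ = 0)
    (hcent : ∀ (n : ℕ) (l : S), φ (z n l) = 0)
    (hbdd : ∀ (m : ℕ) (w : Fin m → S), ∃ D : ℝ,
      ∀ n : ℕ, ‖φ (List.ofFn fun k => z n (w k)).prod‖ ≤ D)
    (hcov : ∀ l l' : S,
      Filter.Tendsto (fun N : ℕ => (N : ℂ)⁻¹ * ∑ n ∈ Finset.range N, φ (z n l * z n l'))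
        Filter.atTop (nhds (C l l')))
    {m : ℕ} (hm : 0 < m) (ω : Fin m → S) (mu : Setoid (Fin m) → Setoid (Fin m) → ℂ)
    (hmu : IsMobius (IBNC (chiOf lab ω)) mu) :
    Filter.Tendsto (fun N : ℕ => cum (⇑φ) (chiOf lab ω) mu (fun k => SN z N (ω k)) ⊤)
      Filter.atTop (nhds (climit C ω)) := by
  have hexp := fun N => cum_expand φ lab z hm ω mu (fun ν hν => hindep m ν ω hν mu hmu) N
  refine Filter.Tendsto.congr (fun N => (hexp N).symm) ?_
  by_cases h2 : m = 2
  · subst h2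
    rw [climit_two]
    have hsum : ∀ N : ℕ,
        (∑ n ∈ Finset.range N, cum (⇑φ) (chiOf lab ω) mu (fun k => z n (ω k)) ⊤)
          = ∑ n ∈ Finset.range N, φ (z n (ω 0) * z n (ω 1)) := by
      intro N
      apply Finset.sum_congr rfl
      intro n _
      rw [cum_two φ _ mu hmu]
      show φ (z n (ω 0) * z n (ω 1)) - φ (z n (ω 0)) * φ (z n (ω 1)) = _
      rw [hcent, zero_mul, sub_zero]
    have hc : ∀ N : ℕ, (((Real.sqrt N : ℝ) : ℂ))⁻¹ ^ 2 = ((N : ℂ))⁻¹ := by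
      intro N
      calc (((Real.sqrt N : ℝ) : ℂ))⁻¹ ^ 2
          = (((((Real.sqrt N)⁻¹ ^ 2 : ℝ)) : ℂ)) := by push_cast; ring
        _ = (((N : ℝ)⁻¹ : ℝ) : ℂ) := by rw [inv_pow, Real.sq_sqrt (Nat.cast_nonneg N)]
        _ = ((N : ℂ))⁻¹ := by push_cast; ring
    refine Filter.Tendsto.congr (fun N => ?_) (hcov (ω 0) (ω 1))
    rw [hc N, smul_eq_mul, hsum N]
  · rw [climit_ne C ω h2]
    rcases Nat.lt_or_ge m 2 with h1 | h3
    · have hm1 : m = 1 := by omega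
      subst hm1
      have hzero : ∀ N : ℕ, (((Real.sqrt N : ℝ) : ℂ))⁻¹ ^ 1 •
          ∑ n ∈ Finset.range N, cum (⇑φ) (chiOf lab ω) mu (fun k => z n (ω k)) ⊤ = 0 := by
        intro N
        have hz : ∀ n ∈ Finset.range N,
            cum (⇑φ) (chiOf lab ω) mu (fun k => z n (ω k)) ⊤ = 0 := by
          intro n _
          rw [cum_one φ _ mu hmu]
          exact hcent n (ω 0)
        rw [Finset.sum_congr rfl hz, Finset.sum_const_zero, smul_zero]
      refine Filter.Tendsto.congr (fun N => (hzero N).symm) tendsto_const_nhds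
    · have hm3 : 3 ≤ m := by omega
      obtain ⟨D, hD0, hD⟩ := cum_bound φ lab z ω mu hbdd
      apply squeeze_zero_norm' (a := fun N : ℕ => (Real.sqrt N)⁻¹ * D)
      · rw [Filter.eventually_atTop]
        refine ⟨1, fun N hN => ?_⟩
        have hsN : (1 : ℝ) ≤ Real.sqrt N :=
          Real.one_le_sqrt.mpr (by exact_mod_cast hN)
        have ht0 : (0 : ℝ) ≤ (Real.sqrt N)⁻¹ := inv_nonneg.mpr (Real.sqrt_nonneg _)
        have ht1 : (Real.sqrt N)⁻¹ ≤ 1 := inv_le_one_of_one_le₀ hsN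
        have hnorm : ‖(((Real.sqrt N : ℝ) : ℂ))⁻¹ ^ m‖ = ((Real.sqrt N)⁻¹) ^ m := by
          rw [norm_pow, norm_inv, Complex.norm_real, Real.norm_eq_abs,
            abs_of_nonneg (Real.sqrt_nonneg _)]
        have hsumb : ‖∑ n ∈ Finset.range N,
            cum (⇑φ) (chiOf lab ω) mu (fun k => z n (ω k)) ⊤‖ ≤ (N : ℝ) * D := by
          refine (norm_sum_le _ _).trans ?_
          have hb := Finset.sum_le_card_nsmul (Finset.range N)
            (fun n => ‖cum (⇑φ) (chiOf lab ω) mu (fun k => z n (ω k)) ⊤‖) D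
            (fun n _ => hD n)
          simpa [Finset.card_range, nsmul_eq_mul] using hb
        have hNne : ((N : ℝ)) ≠ 0 := by
          have : (0 : ℝ) < N := by exact_mod_cast hN
          exact ne_of_gt this
        calc ‖(((Real.sqrt N : ℝ) : ℂ))⁻¹ ^ m • ∑ n ∈ Finset.range N,
              cum (⇑φ) (chiOf lab ω) mu (fun k => z n (ω k)) ⊤‖
            = ‖(((Real.sqrt N : ℝ) : ℂ))⁻¹ ^ m‖ * ‖∑ n ∈ Finset.range N,
              cum (⇑φ) (chiOf lab ω) mu (fun k => z n (ω k)) ⊤‖ := norm_smul _ _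
          _ = ((Real.sqrt N)⁻¹) ^ m * ‖∑ n ∈ Finset.range N,
              cum (⇑φ) (chiOf lab ω) mu (fun k => z n (ω k)) ⊤‖ := by rw [hnorm]
          _ ≤ ((Real.sqrt N)⁻¹) ^ m * ((N : ℝ) * D) :=
              mul_le_mul_of_nonneg_left hsumb (pow_nonneg ht0 m)
          _ = (((Real.sqrt N)⁻¹) ^ m * (N : ℝ)) * D := by ring
          _ ≤ (Real.sqrt N)⁻¹ * D := by
              apply mul_le_mul_of_nonneg_right _ hD0
              obtain ⟨k, hk⟩ : ∃ k, m = k + 2 := ⟨m - 2, by omega⟩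
              have hk1 : 1 ≤ k := by omega
              have hNsq : ((Real.sqrt N)⁻¹) ^ 2 * (N : ℝ) = 1 := by
                rw [inv_pow, Real.sq_sqrt (Nat.cast_nonneg N), inv_mul_cancel₀ hNne]
              rw [hk]
              calc ((Real.sqrt N)⁻¹) ^ (k + 2) * (N : ℝ)
                  = ((Real.sqrt N)⁻¹) ^ k * (((Real.sqrt N)⁻¹) ^ 2 * (N : ℝ)) := by ring
                _ = ((Real.sqrt N)⁻¹) ^ k := by rw [hNsq, mul_one]
                _ ≤ ((Real.sqrt N)⁻¹) ^ 1 := pow_le_pow_of_le_one ht0 ht1 hk1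
                _ = (Real.sqrt N)⁻¹ := pow_one _
      · have h := tendsto_sqrt_inv.mul_const D
        rw [zero_mul] at h
        exact h

open Classical in
theorem moment_SN_tendsto
    (hφ1 : φ 1 = 1)
    (hindep : ∀ (m : ℕ) (ν : Fin m → ℕ) (ω : Fin m → S),
      (¬ ∃ n₀, ∀ k, ν k = n₀) →
      ∀ mu : Setoid (Fin m) → Setoid (Fin m) → ℂ,
        IsMobius (IBNC (chiOf lab ω)) mu →
        cum (⇑φ) (chiOf lab ω) mu (fun k => z (ν k) (ω k)) ⊤ = 0)
    (hcent : ∀ (n : ℕ) (l : S), φ (z n l) = 0)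
    (hbdd : ∀ (m : ℕ) (w : Fin m → S), ∃ D : ℝ,
      ∀ n : ℕ, ‖φ (List.ofFn fun k => z n (w k)).prod‖ ≤ D)
    (hcov : ∀ l l' : S,
      Filter.Tendsto (fun N : ℕ => (N : ℂ)⁻¹ * ∑ n ∈ Finset.range N, φ (z n l * z n l'))
        Filter.atTop (nhds (C l l')))
    (Γ : FreeAlgebra ℂ S →ₗ[ℂ] ℂ) (hΓ : IsCLTDistribution lab Γ)
    (hΓC : ∀ k l : S, Γ (FreeAlgebra.ι ℂ k * FreeAlgebra.ι ℂ l) = C k l) :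
    ∀ (m : ℕ) (ω : Fin m → S),
      Filter.Tendsto (fun N : ℕ => φ (List.ofFn fun k => SN z N (ω k)).prod)
        Filter.atTop (nhds (Γ (List.ofFn fun k => FreeAlgebra.ι ℂ (ω k)).prod)) := by
  intro m
  induction m using Nat.strong_induction_on with
  | _ m IH =>
  intro ω
  rcases Nat.eq_zero_or_pos m with hm0 | hm
  · subst hm0
    simp only [List.ofFn_zero, List.prod_nil, hφ1, hΓ.1]
    exact tendsto_const_nhds
  · obtain ⟨mu, hmu⟩ := exists_isMobius (IBNC (chiOf lab ω))
    have hmu1 : mu ⊤ ⊤ = 1 := mu_refl hmu (top_mem_IBNC _)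
    have hidφ : ∀ N : ℕ, φ (List.ofFn fun k => SN z N (ω k)).prod
        = cum (⇑φ) (chiOf lab ω) mu (fun k => SN z N (ω k)) ⊤
          - ∑ σ ∈ (IBNCfin (chiOf lab ω)).erase ⊤,
              mu σ ⊤ * phiPart (⇑φ) (fun k => SN z N (ω k)) σ :=
      fun N => moment_eq_cum_sub φ hm _ mu hmu1 _
    have hidΓ : Γ (List.ofFn fun k => FreeAlgebra.ι ℂ (ω k)).prod
        = climit C ω - ∑ σ ∈ (IBNCfin (chiOf lab ω)).erase ⊤,
            mu σ ⊤ * phiPart (⇑Γ) (fun k => FreeAlgebra.ι ℂ (ω k)) σ := by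
      rw [moment_eq_cum_sub Γ hm (chiOf lab ω) mu hmu1,
        Gamma_cum lab C Γ hΓ hΓC hm ω mu hmu]
    rw [hidΓ]
    refine Filter.Tendsto.congr (fun N => (hidφ N).symm) ?_
    apply Filter.Tendsto.sub
    · exact cum_SN_tendsto φ lab z C hindep hcent hbdd hcov hm ω mu hmu
    · apply tendsto_finset_sum
      intro σ hσ
      apply Filter.Tendsto.const_mul
      have hσtop : σ ≠ ⊤ := (Finset.mem_erase.mp hσ).1
      letI : Fintype (Quotient σ) := Fintype.ofFinite _
      have hφσ : ∀ N : ℕ, phiPart (⇑φ) (fun k => SN z N (ω k)) σ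
          = ∏ q : Quotient σ,
              φ (List.ofFn fun i => SN z N (ω ((blockList σ q).get i))).prod := by
        intro N
        rw [phiPart_eq, finprod_eq_prod_of_fintype]
      have hΓσ : phiPart (⇑Γ) (fun k => FreeAlgebra.ι ℂ (ω k)) σ
          = ∏ q : Quotient σ,
              Γ (List.ofFn fun i => FreeAlgebra.ι ℂ (ω ((blockList σ q).get i))).prod := by
        rw [phiPart_eq, finprod_eq_prod_of_fintype]
      rw [hΓσ]
      refine Filter.Tendsto.congr (fun N => (hφσ N).symm) ?_
      apply tendsto_finset_prod
      intro q _
      exact IH _ (blockList_length_lt σ hσtop q) (fun i => ω ((blockList σ q).get i))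

end CLT

/-- free-free-Boolean central limit theorem.  Let
`zₙ = ((z_{n,i})_{i∈I}, (z_{n,j})_{j∈J}, (z_{n,k})_{k∈K})`, `n ∈ ℕ`, be a
free-free-Boolean independent sequence of three-faced families in `(A,φ)` (equivalently —
and this is the formulation used here — all mixed free-free-Boolean cumulants involving
variables from distinct members of the sequence vanish), normalized (`φ(z_{n,l}) = 0`),
with uniformly bounded mixed moments, and with `(1/N) Σ_{n<N} φ(z_{n,l} z_{n,l'}) → C_{l,l'}`.
Then the distribution of `S_N` converges pointwise on `ℂ⟨Z_l : l ∈ I⊔J⊔K⟩` to the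
free-free-Boolean central limit distribution `Γ_C`; in particular every cumulant of `S_N`
converges to `C_{ω(1),ω(2)}` if `m = 2` and to `0` otherwise. -/
theorem FFB_central_limit_theorem {A : Type*} [Ring A] [Algebra ℂ A]
    (φ : A →ₗ[ℂ] ℂ) (hφ : φ 1 = 1)
    {S : Type*} (lab : S → Letter) (z : ℕ → S → A)
    (hindep : ∀ (m : ℕ) (ν : Fin m → ℕ) (ω : Fin m → S),
      (¬ ∃ n₀, ∀ k, ν k = n₀) →
      ∀ mu : Setoid (Fin m) → Setoid (Fin m) → ℂ,
        IsMobius (IBNC (chiOf lab ω)) mu →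
        cum (⇑φ) (chiOf lab ω) mu (fun k => z (ν k) (ω k)) ⊤ = 0)
    (hcent : ∀ (n : ℕ) (l : S), φ (z n l) = 0)
    (hbdd : ∀ (m : ℕ) (w : Fin m → S), ∃ D : ℝ,
      ∀ n : ℕ, ‖φ (List.ofFn fun k => z n (w k)).prod‖ ≤ D)
    (C : S → S → ℂ)
    (hcov : ∀ l l' : S,
      Filter.Tendsto (fun N : ℕ => (N : ℂ)⁻¹ * ∑ n ∈ Finset.range N, φ (z n l * z n l'))
        Filter.atTop (nhds (C l l')))
    (Γ : FreeAlgebra ℂ S →ₗ[ℂ] ℂ) (hΓ : IsCLTDistribution lab Γ)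
    (hΓC : ∀ k l : S, Γ (FreeAlgebra.ι ℂ k * FreeAlgebra.ι ℂ l) = C k l) :
    (∀ P : FreeAlgebra ℂ S,
      Filter.Tendsto (fun N : ℕ => φ (FreeAlgebra.lift ℂ (SN z N) P))
        Filter.atTop (nhds (Γ P))) ∧
    (∀ (m : ℕ), 0 < m → ∀ (ω : Fin m → S)
      (mu : Setoid (Fin m) → Setoid (Fin m) → ℂ),
      IsMobius (IBNC (chiOf lab ω)) mu →
      ((∀ hm : m = 2,
        Filter.Tendsto (fun N : ℕ => cum (⇑φ) (chiOf lab ω) mu (fun k => SN z N (ω k)) ⊤)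
          Filter.atTop (nhds (C (ω ⟨0, by omega⟩) (ω ⟨1, by omega⟩)))) ∧
      (m ≠ 2 →
        Filter.Tendsto (fun N : ℕ => cum (⇑φ) (chiOf lab ω) mu (fun k => SN z N (ω k)) ⊤)
          Filter.atTop (nhds 0)))) := by
  constructor
  · -- Part 1: convergence of the distribution on all polynomials
    have hword : ∀ l : List S,
        Filter.Tendsto (fun N : ℕ =>
            φ (FreeAlgebra.lift ℂ (SN z N) ((l.map (FreeAlgebra.ι ℂ)).prod)))
          Filter.atTop (nhds (Γ ((l.map (FreeAlgebra.ι ℂ)).prod))) := by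
      intro l
      have h1 : ∀ N : ℕ, (FreeAlgebra.lift ℂ (SN z N)) ((l.map (FreeAlgebra.ι ℂ)).prod)
          = (List.ofFn fun k => SN z N (l.get k)).prod := by
        intro N
        rw [map_list_prod, List.map_map]
        have hcomp : (⇑(FreeAlgebra.lift ℂ (SN z N))) ∘ (FreeAlgebra.ι ℂ) = SN z N := by
          funext x; exact FreeAlgebra.lift_ι_apply _ _
        rw [hcomp]
        conv_lhs => rw [← List.ofFn_get l, List.map_ofFn]
        rfl
      have h2 : (l.map (FreeAlgebra.ι ℂ)).prod
          = (List.ofFn fun k => FreeAlgebra.ι ℂ (l.get k)).prod := by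
        conv_lhs => rw [← List.ofFn_get l, List.map_ofFn]
        rfl
      refine Filter.Tendsto.congr (fun N => congrArg φ (h1 N).symm) ?_
      rw [h2]
      exact moment_SN_tendsto φ lab z C hφ hindep hcent hbdd hcov Γ hΓ hΓC l.length l.get
    intro P
    have hspan : ∀ Q ∈ Submodule.span ℂ
        {x : FreeAlgebra ℂ S | ∃ l : List S, (l.map (FreeAlgebra.ι ℂ)).prod = x},
        Filter.Tendsto (fun N : ℕ => φ (FreeAlgebra.lift ℂ (SN z N) Q))
          Filter.atTop (nhds (Γ Q)) := by
      intro Q hQ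
      induction hQ using Submodule.span_induction with
      | mem x hx =>
        obtain ⟨l, rfl⟩ := hx
        exact hword l
      | zero =>
        simp only [map_zero]
        exact tendsto_const_nhds
      | add x y hx hy ihx ihy =>
        simp only [map_add]
        exact ihx.add ihy
      | smul a x hx ih =>
        simp only [map_smul]
        exact ih.const_smul a
    apply hspan
    refine FreeAlgebra.induction ℂ S ?_ ?_ ?_ ?_ P
    · intro r
      rw [Algebra.algebraMap_eq_smul_one]
      exact Submodule.smul_mem _ r (Submodule.subset_span ⟨[], by simp⟩)
    · intro x
      exact Submodule.subset_span ⟨[x], by simp⟩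
    · intro a b ha hb
      have hmul : Submodule.span ℂ
            {x : FreeAlgebra ℂ S | ∃ l : List S, (l.map (FreeAlgebra.ι ℂ)).prod = x} *
          Submodule.span ℂ
            {x : FreeAlgebra ℂ S | ∃ l : List S, (l.map (FreeAlgebra.ι ℂ)).prod = x}
          ≤ Submodule.span ℂ
            {x : FreeAlgebra ℂ S | ∃ l : List S, (l.map (FreeAlgebra.ι ℂ)).prod = x} := by
        rw [Submodule.span_mul_span]
        apply Submodule.span_le.mpr
        rintro x ⟨u, hu, v, hv, rfl⟩
        obtain ⟨l1, rfl⟩ := hu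
        obtain ⟨l2, rfl⟩ := hv
        exact Submodule.subset_span ⟨l1 ++ l2, by rw [List.map_append, List.prod_append]⟩
      exact hmul (Submodule.mul_mem_mul ha hb)
    · intro a b ha hb
      exact Submodule.add_mem _ ha hb
  · -- Part 2: convergence of the cumulants
    intro m hm ω mu hmu
    constructor
    · intro hm2
      subst hm2
      have h := cum_SN_tendsto φ lab z C hindep hcent hbdd hcov (by norm_num) ω mu hmu
      rw [climit_two] at h
      exact h
    · intro hne
      have h := cum_SN_tendsto φ lab z C hindep hcent hbdd hcov hm ω mu hmu
      rwa [climit_ne C ω hne] at h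

end FFB
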